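/- Let a ∈ ℝⁿ (n ≥ 2). Then for every Chebyshev vector v ∈ ℝⁿ the unique minimizer μ(a,v) of u ↦ ‖a - u·v‖_∞ is non-zero if and only if a is alternance-free. -/

import Mathlib

open Filter

/-- A vector is Chebyshev if all of its components are non-zero. -/
def Cheb {n : ℕ} (v : Fin n → ℝ) : Prop := ∀ i, v i ≠ 0

/-- `mu a v` is the (unique, when `v` is Chebyshev) minimizer of `u ↦ ‖a - u • v‖`,
where `‖·‖` is the sup-norm on `Fin n → ℝ`. -/
noncomputable def mu {n : ℕ} (a v : Fin n → ℝ) : ℝ :=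
  Classical.epsilon fun t : ℝ => ∀ u : ℝ, ‖a - t • v‖ ≤ ‖a - u • v‖

noncomputable def phi {m n : ℕ} (A : Fin m → Fin n → ℝ) (v : Fin n → ℝ) : Fin m → ℝ :=
  fun i => mu (A i) v

noncomputable def psi {m n : ℕ} (A : Fin m → Fin n → ℝ) (u : Fin m → ℝ) : Fin n → ℝ :=
  fun j => mu (fun i => A i j) u

/-- `A` preserves Chebyshev systems. -/
def PreservesCheb {m n : ℕ} (A : Fin m → Fin n → ℝ) : Prop :=
  (∀ v : Fin n → ℝ, Cheb v → Cheb (phi A v)) ∧ (∀ u : Fin m → ℝ, Cheb u → Cheb (psi A u))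

/-- A vector is alternance-free if exactly one component attains the max absolute value. -/
def AlternanceFree {n : ℕ} (a : Fin n → ℝ) : Prop := ∃! i, |a i| = ‖a‖

/-- Chebyshev norm of the residual `A - u vᵀ`. -/
noncomputable def Cerr {m n : ℕ} (A : Fin m → Fin n → ℝ) (u : Fin m → ℝ) (v : Fin n → ℝ) : ℝ :=
  ⨆ i, ⨆ j, |A i j - u i * v j|

/-- Chebyshev norm of a matrix. -/
noncomputable def CnormM {m n : ℕ} (A : Fin m → Fin n → ℝ) : ℝ :=
  ⨆ i, ⨆ j, |A i j|

/-- The sequence `v⁽ᵏ⁾` of the alternating minimization method started at `v0`. -/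
noncomputable def vseq {m n : ℕ} (A : Fin m → Fin n → ℝ) (v0 : Fin n → ℝ) : ℕ → Fin n → ℝ
  | 0 => v0
  | k + 1 => psi A (phi A (vseq A v0 k))

/-!
If `|a|` attains `‖a‖` at two indices `i ≠ j`, take `v` with entries `±1`, of the sign of `a i` at `i`
and of the opposite sign of `a j` at `j`: every shift `u • v` with `u ≠ 0` pushes one of these two
entries of `a - u • v` beyond `‖a‖`, so `μ(a, v) = 0`. If `‖a‖ > 0` is attained only at `i`, then
moving `a` by a small multiple of `v` that shrinks the `i`-th entry lowers the sup-norm, since the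
other entries stay below `‖a‖`; hence `0` is not a minimizer.
-/

open Topology

lemma exists_forall_norm_sub_smul_le {E : Type*} [NormedAddCommGroup E] [NormedSpace ℝ E]
    (a : E) {v : E} (hv : v ≠ 0) : ∃ t : ℝ, ∀ u : ℝ, ‖a - t • v‖ ≤ ‖a - u • v‖ := by
  refine (by fun_prop : Continuous fun u : ℝ => ‖a - u • v‖).exists_forall_le ?_
  have hcoercive : Tendsto (fun u : ℝ => ‖u‖ * ‖v‖ - ‖a‖) (cocompact ℝ) atTop :=
    tendsto_atTop_add_const_right _ _ <|
      tendsto_norm_cocompact_atTop.atTop_mul_const (norm_pos_iff.2 hv)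
  refine tendsto_atTop_mono (fun u => ?_) hcoercive
  simpa [norm_smul, norm_sub_rev] using norm_sub_norm_le (u • v) a

lemma norm_sub_mu_smul_le {n : ℕ} (a : Fin n → ℝ) {v : Fin n → ℝ} (hv : v ≠ 0) (u : ℝ) :
    ‖a - mu a v • v‖ ≤ ‖a - u • v‖ :=
  Classical.epsilon_spec (exists_forall_norm_sub_smul_le a hv) u

lemma mu_eq_zero_of_forall_norm_lt {n : ℕ} {a v : Fin n → ℝ} (hv : v ≠ 0)
    (h : ∀ u : ℝ, u ≠ 0 → ‖a‖ < ‖a - u • v‖) : mu a v = 0 := by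
  by_contra hmu
  have := norm_sub_mu_smul_le a hv 0
  rw [zero_smul, sub_zero] at this
  exact (h _ hmu).not_ge this

lemma abs_lt_abs_add_mul_ite (x : ℝ) {u : ℝ} (hu : 0 < u) :
    |x| < |x + u * if 0 ≤ x then 1 else -1| := by
  split_ifs with hx
  · rw [abs_of_nonneg hx, abs_of_pos (by linarith)]
    linarith
  · rw [abs_of_neg (not_le.1 hx), abs_of_neg (by linarith)]
    linarith

lemma exists_cheb_mu_eq_zero {n : ℕ} {a : Fin n → ℝ} {i j : Fin n} (hij : i ≠ j)
    (hi : |a i| = ‖a‖) (hj : |a j| = ‖a‖) : ∃ v, Cheb v ∧ mu a v = 0 := by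
  set s : ℝ → ℝ := fun x => if 0 ≤ x then 1 else -1
  have hs : ∀ x, s x ≠ 0 := fun x => by dsimp only [s]; split_ifs <;> norm_num
  set v := Function.update (fun k => s (a k)) j (-s (a j))
  have hvi : v i = s (a i) := Function.update_of_ne hij _ _
  have hvj : v j = -s (a j) := Function.update_self _ _ _
  have hv : Cheb v := fun k => by
    rcases eq_or_ne k j with rfl | hk
    · simpa [hvj] using hs _
    · simpa [v, Function.update_of_ne hk] using hs _
  refine ⟨v, hv, mu_eq_zero_of_forall_norm_lt (Function.ne_iff.2 ⟨i, hv i⟩) fun u hu => ?_⟩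
  rcases hu.lt_or_gt with hu | hu
  · calc ‖a‖ = |a i| := hi.symm
      _ < |a i + -u * s (a i)| := abs_lt_abs_add_mul_ite _ (neg_pos.2 hu)
      _ = ‖(a - u • v) i‖ := by simp [hvi, sub_eq_add_neg]
      _ ≤ ‖a - u • v‖ := norm_le_pi_norm _ i
  · calc ‖a‖ = |a j| := hj.symm
      _ < |a j + u * s (a j)| := abs_lt_abs_add_mul_ite _ hu
      _ = ‖(a - u • v) j‖ := by simp [hvj, sub_eq_add_neg]
      _ ≤ ‖a - u • v‖ := norm_le_pi_norm _ j

lemma exists_norm_sub_smul_lt {ι : Type*} [Fintype ι] {a v : ι → ℝ} {i : ι} (hai : a i ≠ 0)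
    (hvi : v i ≠ 0) (hmax : ∀ k ≠ i, |a k| < |a i|) : ∃ t : ℝ, ‖a - t • v‖ < |a i| := by
  -- `t = ε a i / v i` shrinks the `i`-th entry to `(1 - ε) a i` and barely moves the others
  suffices ∀ᶠ ε in 𝓝[>] (0 : ℝ), ∀ k, |a k - ε * a i / v i * v k| < |a i| by
    obtain ⟨ε, hε⟩ := this.exists
    exact ⟨ε * a i / v i, (pi_norm_lt_iff (abs_pos.2 hai)).2 hε⟩
  refine eventually_all.2 fun k => ?_
  rcases eq_or_ne k i with rfl | hk
  · filter_upwards [Ioo_mem_nhdsGT one_pos] with ε ⟨hε0, hε1⟩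
    rw [div_mul_cancel₀ _ hvi, ← one_sub_mul, abs_mul, abs_of_pos (sub_pos.2 hε1)]
    nlinarith [abs_pos.2 hai]
  · have hcont : Continuous fun ε : ℝ => |a k - ε * a i / v i * v k| := by fun_prop
    exact nhdsWithin_le_nhds <| (hcont.tendsto 0).eventually_lt_const (by simpa using hmax k hk)

lemma mu_ne_zero_of_alternanceFree {n : ℕ} [Nontrivial (Fin n)] {a v : Fin n → ℝ}
    (ha : AlternanceFree a) (hv : Cheb v) : mu a v ≠ 0 := by
  obtain ⟨i, hi, huniq⟩ := ha
  have hmax : ∀ k ≠ i, |a k| < |a i| := fun k hk =>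
    hi ▸ (norm_le_pi_norm a k).lt_of_ne fun h => hk (huniq k h)
  obtain ⟨k, hk⟩ := exists_ne i
  obtain ⟨t, ht⟩ := exists_norm_sub_smul_lt
    (abs_pos.1 ((abs_nonneg _).trans_lt (hmax k hk))) (hv i) hmax
  intro hmu
  have := norm_sub_mu_smul_le a (Function.ne_iff.2 ⟨i, hv i⟩) t
  rw [hmu, zero_smul, sub_zero] at this
  linarith

theorem stmt2 {n : ℕ} (hn : 2 ≤ n) (a : Fin n → ℝ) :
    (∀ v : Fin n → ℝ, Cheb v → mu a v ≠ 0) ↔ AlternanceFree a := by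
  have : Nontrivial (Fin n) := Fin.nontrivial_iff_two_le.mpr hn
  refine ⟨fun h => ?_, fun ha v hv => mu_ne_zero_of_alternanceFree ha hv⟩
  obtain ⟨i, hi⟩ := (IsGreatest.pi_norm a).1
  by_contra hfree
  obtain ⟨j, hj, hji⟩ : ∃ j, |a j| = ‖a‖ ∧ j ≠ i := by
    by_contra! hunique
    exact hfree ⟨i, hi, hunique⟩
  obtain ⟨v, hv, hmu⟩ := exists_cheb_mu_eq_zero hji.symm hi hj
  exact h v hv hmu
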